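/- Let 0 < ν < √2 and let A be the soliton on finite background. Then for τ ∈ ℝ one has A(0,τ) = 0 if and only if cos(ντ) = 2(1−ν²)/√(4−2ν²). (Indeed φ(0) = 0, P(0) = √2ν³, Q(0) = √2ν, so A(0,τ) = √2ν³/(√2ν − σcos(ντ)) − 1.) -/

import Mathlib

open Real Filter Topology

/-- Benjamin–Feir growth rate `σ = ν√(2−ν²)`. -/
noncomputable def sfbSigma (ν : ℝ) : ℝ := ν * Real.sqrt (2 - ν ^ 2)

/-- Displaced amplitude `G(ξ,τ) = P(ξ)/(Q(ξ) − σ cos(ντ))` of the SFB, with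
`P(ξ) = ν√2·√(2ν²cosh²(σξ) − σ²)` and `Q(ξ) = ν√2·cosh(σξ)`. -/
noncomputable def sfbG (ν ξ τ : ℝ) : ℝ :=
  (ν * Real.sqrt 2 * Real.sqrt (2 * ν ^ 2 * Real.cosh (sfbSigma ν * ξ) ^ 2 - sfbSigma ν ^ 2)) /
  (ν * Real.sqrt 2 * Real.cosh (sfbSigma ν * ξ) - sfbSigma ν * Real.cos (ν * τ))

/-- SFB phase `φ(ξ) = arctan(−(σ/ν²) tanh(σξ))`. -/
noncomputable def sfbPhi (ν ξ : ℝ) : ℝ :=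
  Real.arctan (-(sfbSigma ν / ν ^ 2) * Real.tanh (sfbSigma ν * ξ))

/-- The soliton on finite background: `A(ξ,τ) = e^{−iξ}(G(ξ,τ)e^{iφ(ξ)} − 1)`. -/
noncomputable def sfbA (ν ξ τ : ℝ) : ℂ :=
  Complex.exp (-Complex.I * (ξ : ℂ)) *
    ((sfbG ν ξ τ : ℂ) * Complex.exp (Complex.I * (sfbPhi ν ξ : ℂ)) - 1)

lemma div_eq_one_iff_eq_of_ne_zero_left {K : Type*} [GroupWithZero K] {a b : K} (ha : a ≠ 0) :
    a / b = 1 ↔ a = b := by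
  rcases eq_or_ne b 0 with rfl | hb
  · simp [ha]
  · exact div_eq_one_iff_eq hb

lemma sfbSigma_sq {ν : ℝ} (hν : ν ^ 2 ≤ 2) : sfbSigma ν ^ 2 = ν ^ 2 * (2 - ν ^ 2) := by
  rw [sfbSigma, mul_pow, Real.sq_sqrt (by linarith)]

lemma sfbPhi_zero (ν : ℝ) : sfbPhi ν 0 = 0 := by
  simp [sfbPhi]

lemma sfbA_zero (ν τ : ℝ) : sfbA ν 0 τ = (sfbG ν 0 τ : ℂ) - 1 := by
  rw [sfbA, sfbPhi_zero]
  simp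

lemma sfbG_zero {ν : ℝ} (hν : ν ^ 2 ≤ 2) (τ : ℝ) :
    sfbG ν 0 τ = Real.sqrt 2 * ν ^ 3 / (Real.sqrt 2 * ν - sfbSigma ν * Real.cos (ν * τ)) := by
  have hP : 2 * ν ^ 2 * Real.cosh (sfbSigma ν * 0) ^ 2 - sfbSigma ν ^ 2 = (ν ^ 2) ^ 2 := by
    rw [sfbSigma_sq hν, mul_zero, Real.cosh_zero]
    ring
  rw [sfbG, hP, Real.sqrt_sq (sq_nonneg ν), mul_zero, Real.cosh_zero]
  ring_nf

lemma sfbA_zero_eq_zero_iff {ν : ℝ} (hν0 : 0 < ν) (hν : ν ^ 2 ≤ 2) (τ : ℝ) :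
    sfbA ν 0 τ = 0 ↔ Real.sqrt (2 - ν ^ 2) * Real.cos (ν * τ) = Real.sqrt 2 * (1 - ν ^ 2) := by
  have hP : Real.sqrt 2 * ν ^ 3 ≠ 0 := by positivity
  rw [sfbA_zero, sub_eq_zero, ← Complex.ofReal_one, Complex.ofReal_inj, sfbG_zero hν,
    div_eq_one_iff_eq_of_ne_zero_left hP, sfbSigma]
  constructor <;> intro h
  · exact mul_left_cancel₀ hν0.ne' (by linear_combination h)
  · linear_combination ν * h

/-- For `0 < ν < √2`, the SFB vanishes at position `ξ = 0` at time `τ`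
if and only if `cos(ντ) = 2(1−ν²)/√(4−2ν²)`. -/
theorem sfb_singular_points_at_zero
    (ν : ℝ) (hν0 : 0 < ν) (hν2 : ν < Real.sqrt 2) (τ : ℝ) :
    sfbA ν 0 τ = 0 ↔ Real.cos (ν * τ) = 2 * (1 - ν ^ 2) / Real.sqrt (4 - 2 * ν ^ 2) := by
  have hν : ν ^ 2 < 2 := by
    simpa [Real.sq_sqrt zero_le_two] using pow_lt_pow_left₀ hν2 hν0.le two_ne_zero
  have hroot : Real.sqrt (4 - 2 * ν ^ 2) = Real.sqrt 2 * Real.sqrt (2 - ν ^ 2) := by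
    rw [← Real.sqrt_mul zero_le_two]
    ring_nf
  have h2 : Real.sqrt 2 * Real.sqrt 2 = 2 := Real.mul_self_sqrt zero_le_two
  rw [sfbA_zero_eq_zero_iff hν0 hν.le, hroot, eq_div_iff (by positivity)]
  constructor <;> intro h
  · linear_combination Real.sqrt 2 * h + (1 - ν ^ 2) * h2
  · exact mul_left_cancel₀ (Real.sqrt_pos.2 two_pos).ne'
      (by linear_combination h - (1 - ν ^ 2) * h2)
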